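/- Let f_w be a d-layer ReLU network with weight matrices W₁, …, W_d all having spectral norm equal to β, let B > 0 and let x be an input with ‖x‖₂ ≤ B. Let U₁, …, U_d be perturbation matrices with ‖U_i‖₂ ≤ (1/d)‖W_i‖₂ for every i, and let f_{w+u} be the network with weights W_i + U_i. Then ‖f_{w+u}(x) − f_w(x)‖₂ ≤ e · B · β^{d−1} · Σ_{i=1}^d ‖U_i‖₂. -/

import Mathlib

/-! Let `a l` be the distance between the perturbed and the unperturbed activations after `l`
layers. Splitting `(W + U) φ(g) - W φ(f) = W (φ(g) - φ(f)) + U φ(g)` and using that the ReLU `φ`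
is 1-Lipschitz and fixes `0` gives `a (l+1) ≤ (β + ‖U_l‖) a l + ‖U_l‖ β^l B`. As
`‖U_l‖ ≤ β / d`, this yields `a d ≤ (1 + 1/d)^d β^(d-1) B ∑ ‖U_l‖`, and `(1 + 1/d)^d ≤ e`. -/

/-- The spectral norm (largest singular value, i.e. the `ℓ₂ → ℓ₂` operator norm)
of a rectangular matrix. -/
noncomputable def matrixSpectralNorm {𝕜 : Type*} [RCLike 𝕜] {m n : Type*} [Fintype m] [Fintype n]
    [DecidableEq n] (A : Matrix m n 𝕜) : ℝ :=
  ‖LinearMap.toContinuousLinearMap (Matrix.toEuclideanLin A)‖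

/-- The Euclidean (`ℓ₂`) norm of a finite real vector. -/
noncomputable def vecNorm {n : Type*} [Fintype n] (x : n → ℝ) : ℝ :=
  Real.sqrt (∑ i, x i ^ 2)

/-- The activations of a ReLU network: `netFwd dims W x 0 = x`, and
`netFwd dims W x (l+1) = W_l (φ (netFwd dims W x l))` where the coordinatewise ReLU
`φ(z) = max(z,0)` is applied between layers (but not to the input `x`), so that
`netFwd dims W x d = W_{d-1} φ(W_{d-2} φ(⋯ φ(W_0 x)))`. -/
noncomputable def netFwd (dims : ℕ → ℕ)
    (W : ∀ l : ℕ, Matrix (Fin (dims (l + 1))) (Fin (dims l)) ℝ)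
    (x : Fin (dims 0) → ℝ) : ∀ l : ℕ, Fin (dims l) → ℝ
  | 0 => x
  | l + 1 => (W l).mulVec
      (fun i => if l = 0 then netFwd dims W x l i else max (netFwd dims W x l i) 0)

open Finset Matrix

section VecNorm

variable {m n : Type*} [Fintype m] [Fintype n]

lemma vecNorm_eq_norm_toLp (x : n → ℝ) : vecNorm x = ‖WithLp.toLp 2 x‖ := by
  simp [vecNorm, EuclideanSpace.norm_eq, sq_abs]

lemma vecNorm_nonneg (x : n → ℝ) : 0 ≤ vecNorm x :=
  Real.sqrt_nonneg _

@[simp]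
lemma vecNorm_zero : vecNorm (0 : n → ℝ) = 0 := by
  simp [vecNorm]

lemma vecNorm_add_le (u v : n → ℝ) : vecNorm (u + v) ≤ vecNorm u + vecNorm v := by
  simpa only [vecNorm_eq_norm_toLp, WithLp.toLp_add] using norm_add_le _ _

lemma vecNorm_le_of_abs_le {u v : n → ℝ} (h : ∀ i, |u i| ≤ |v i|) : vecNorm u ≤ vecNorm v := by
  refine Real.sqrt_le_sqrt (sum_le_sum fun i _ => ?_)
  simpa only [sq_abs] using pow_le_pow_left₀ (abs_nonneg _) (h i) 2

lemma matrixSpectralNorm_nonneg [DecidableEq n] (A : Matrix m n ℝ) : 0 ≤ matrixSpectralNorm A :=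
  norm_nonneg _

lemma vecNorm_mulVec_le [DecidableEq n] (A : Matrix m n ℝ) (v : n → ℝ) :
    vecNorm (A *ᵥ v) ≤ matrixSpectralNorm A * vecNorm v := by
  rw [vecNorm_eq_norm_toLp, vecNorm_eq_norm_toLp]
  exact (LinearMap.toContinuousLinearMap (toEuclideanLin A)).le_opNorm (WithLp.toLp 2 v)

end VecNorm

section Activation

variable {n : Type*}

def activation (l : ℕ) (v : n → ℝ) : n → ℝ :=
  fun i => if l = 0 then v i else max (v i) 0

lemma abs_activation_sub_activation_le (l : ℕ) (u v : n → ℝ) (i : n) :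
    |activation l u i - activation l v i| ≤ |u i - v i| := by
  unfold activation
  split_ifs
  · exact le_rfl
  · exact abs_max_sub_max_le_abs _ _ 0

variable [Fintype n]

lemma vecNorm_activation_sub_le (l : ℕ) (u v : n → ℝ) :
    vecNorm (activation l u - activation l v) ≤ vecNorm (u - v) :=
  vecNorm_le_of_abs_le (abs_activation_sub_activation_le l u v)

lemma vecNorm_activation_le (l : ℕ) (u : n → ℝ) : vecNorm (activation l u) ≤ vecNorm u :=
  vecNorm_le_of_abs_le fun i => by
    simpa [activation] using abs_activation_sub_activation_le l u 0 i

end Activation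

section Network

variable {dims : ℕ → ℕ} (W U : ∀ l : ℕ, Matrix (Fin (dims (l + 1))) (Fin (dims l)) ℝ)
  (x : Fin (dims 0) → ℝ)

lemma netFwd_succ (l : ℕ) :
    netFwd dims W x (l + 1) = W l *ᵥ activation l (netFwd dims W x l) :=
  rfl

lemma vecNorm_netFwd_le {β : ℝ} {k : ℕ} (hW : ∀ l < k, matrixSpectralNorm (W l) ≤ β) :
    vecNorm (netFwd dims W x k) ≤ β ^ k * vecNorm x := by
  induction k with
  | zero => simp [netFwd]
  | succ k ih =>
    have hβ : 0 ≤ β := (matrixSpectralNorm_nonneg _).trans (hW k k.lt_succ_self)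
    calc vecNorm (netFwd dims W x (k + 1))
        ≤ matrixSpectralNorm (W k) * vecNorm (netFwd dims W x k) :=
          (vecNorm_mulVec_le _ _).trans <| by
            gcongr
            · exact matrixSpectralNorm_nonneg _
            · exact vecNorm_activation_le k _
      _ ≤ β * (β ^ k * vecNorm x) :=
          mul_le_mul (hW k k.lt_succ_self) (ih fun l hl => hW l (hl.trans k.lt_succ_self))
            (vecNorm_nonneg _) hβ
      _ = β ^ (k + 1) * vecNorm x := by ring

lemma vecNorm_netFwd_add_sub_netFwd_succ_le (l : ℕ) :
    vecNorm (netFwd dims (fun l => W l + U l) x (l + 1) - netFwd dims W x (l + 1))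
      ≤ matrixSpectralNorm (W l) *
          vecNorm (netFwd dims (fun l => W l + U l) x l - netFwd dims W x l)
        + matrixSpectralNorm (U l) *
          (vecNorm (netFwd dims (fun l => W l + U l) x l - netFwd dims W x l)
            + vecNorm (netFwd dims W x l)) := by
  set g := netFwd dims (fun l => W l + U l) x
  set f := netFwd dims W x
  have hsplit : g (l + 1) - f (l + 1)
      = W l *ᵥ (activation l (g l) - activation l (f l)) + U l *ᵥ activation l (g l) := by
    simp only [g, f, netFwd_succ, add_mulVec, mulVec_sub]
    abel
  have hg : vecNorm (g l) ≤ vecNorm (g l - f l) + vecNorm (f l) := by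
    simpa using vecNorm_add_le (g l - f l) (f l)
  rw [hsplit]
  refine (vecNorm_add_le _ _).trans (add_le_add ?_ ?_)
  · refine (vecNorm_mulVec_le _ _).trans ?_
    gcongr
    · exact matrixSpectralNorm_nonneg _
    · exact vecNorm_activation_sub_le l _ _
  · refine (vecNorm_mulVec_le _ _).trans ?_
    gcongr
    · exact matrixSpectralNorm_nonneg _
    · exact (vecNorm_activation_le l _).trans hg

end Network

lemma le_of_perturbation_recursion {a u : ℕ → ℝ} {β B ε : ℝ} {n : ℕ} (hβ : 0 ≤ β) (hB : 0 ≤ B)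
    (hε : 0 ≤ ε) (ha₀ : a 0 = 0) (hu₀ : ∀ l < n, 0 ≤ u l) (hu : ∀ l < n, u l ≤ ε * β)
    (ha : ∀ l < n, a (l + 1) ≤ β * a l + u l * (a l + β ^ l * B)) :
    a n ≤ (1 + ε) ^ n * β ^ (n - 1) * B * ∑ l ∈ range n, u l := by
  induction n with
  | zero => simp [ha₀]
  | succ n ih =>
    have hn := n.lt_succ_self
    have ih := ih (fun l hl => hu₀ l (hl.trans hn)) (fun l hl => hu l (hl.trans hn))
      (fun l hl => ha l (hl.trans hn))
    set S := ∑ l ∈ range n, u l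
    have hS : 0 ≤ S := sum_nonneg fun l hl => hu₀ l ((mem_range.1 hl).trans hn)
    have hpow : β * (β ^ (n - 1) * S) = β ^ n * S := by
      rcases n with _ | n
      · simp [S]
      · simp [pow_succ]; ring
    have hun := hu₀ n hn
    have hX : 0 ≤ (1 + ε) ^ n * β ^ (n - 1) * B * S := by positivity
    have hgrowth : (β + u n) * a n ≤ (1 + ε) ^ (n + 1) * β ^ n * B * S :=
      calc (β + u n) * a n ≤ ((1 + ε) * β) * ((1 + ε) ^ n * β ^ (n - 1) * B * S) :=
            (mul_le_mul_of_nonneg_left ih (by linarith)).trans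
              (mul_le_mul_of_nonneg_right (by linarith [hu n hn]) hX)
        _ = (1 + ε) ^ (n + 1) * β ^ n * B * S := by linear_combination (1 + ε) ^ (n + 1) * B * hpow
    have hnew : u n * (β ^ n * B) ≤ (1 + ε) ^ (n + 1) * β ^ n * B * u n := by
      have h1ε : 1 ≤ (1 + ε) ^ (n + 1) := one_le_pow₀ (by linarith)
      nlinarith [mul_nonneg hun (mul_nonneg (pow_nonneg hβ n) hB)]
    calc a (n + 1) ≤ (β + u n) * a n + u n * (β ^ n * B) := by linarith [ha n hn]
      _ ≤ (1 + ε) ^ (n + 1) * β ^ n * B * S + (1 + ε) ^ (n + 1) * β ^ n * B * u n :=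
          add_le_add hgrowth hnew
      _ = (1 + ε) ^ (n + 1) * β ^ (n + 1 - 1) * B * ∑ l ∈ range (n + 1), u l := by
          rw [sum_range_succ, Nat.add_sub_cancel]; ring

lemma one_add_one_div_pow_le_exp_one (n : ℕ) : (1 + 1 / (n : ℝ)) ^ n ≤ Real.exp 1 :=
  calc (1 + 1 / (n : ℝ)) ^ n ≤ Real.exp (1 / n) ^ n := by
        gcongr
        linarith [Real.add_one_le_exp (1 / (n : ℝ))]
    _ = Real.exp (n * (1 / n)) := (Real.exp_nat_mul _ n).symm
    _ ≤ Real.exp 1 := by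
        gcongr
        rw [mul_one_div]
        exact div_self_le_one _

theorem stmt10_general (d : ℕ) (hd : 1 ≤ d) (dims : ℕ → ℕ)
    (W U : ∀ l : ℕ, Matrix (Fin (dims (l + 1))) (Fin (dims l)) ℝ)
    (β B : ℝ)
    (hW : ∀ l < d, matrixSpectralNorm (W l) = β)
    (hU : ∀ l < d, matrixSpectralNorm (U l) ≤ (1 / (d : ℝ)) * matrixSpectralNorm (W l))
    (x : Fin (dims 0) → ℝ) (hx : vecNorm x ≤ B) :
    vecNorm (fun j => netFwd dims (fun l => W l + U l) x d j - netFwd dims W x d j)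
      ≤ Real.exp 1 * B * β ^ (d - 1) * ∑ l ∈ Finset.range d, matrixSpectralNorm (U l) := by
  have hβ : 0 ≤ β := hW 0 hd ▸ matrixSpectralNorm_nonneg (W 0)
  have hB : 0 ≤ B := (vecNorm_nonneg x).trans hx
  have hf : ∀ l < d, vecNorm (netFwd dims W x l) ≤ β ^ l * B := fun l hl =>
    (vecNorm_netFwd_le W x fun k hk => (hW k (hk.trans hl)).le).trans
      (mul_le_mul_of_nonneg_left hx (pow_nonneg hβ l))
  have herr := le_of_perturbation_recursion (n := d) (ε := 1 / d)
    (a := fun l => vecNorm (netFwd dims (fun l => W l + U l) x l - netFwd dims W x l))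
    (u := fun l => matrixSpectralNorm (U l)) hβ hB (by positivity) (by simp [netFwd])
    (fun l _ => matrixSpectralNorm_nonneg _) (fun l hl => hW l hl ▸ hU l hl)
    fun l hl => (vecNorm_netFwd_add_sub_netFwd_succ_le W U x l).trans <| by
      rw [hW l hl]
      gcongr
      · exact matrixSpectralNorm_nonneg _
      · exact hf l hl
  calc _ ≤ (1 + 1 / (d : ℝ)) ^ d * β ^ (d - 1) * B * ∑ l ∈ range d, matrixSpectralNorm (U l) :=
        herr
    _ ≤ Real.exp 1 * β ^ (d - 1) * B * ∑ l ∈ range d, matrixSpectralNorm (U l) := by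
        gcongr
        · exact sum_nonneg fun l _ => matrixSpectralNorm_nonneg _
        · exact one_add_one_div_pow_le_exp_one d
    _ = _ := by ring

/-- the perturbation bound, Lemma 2.2 of the paper: for a `d`-layer
ReLU network whose weight matrices all have spectral norm `β`, and perturbations with
`‖Uᵢ‖₂ ≤ (1/d)‖Wᵢ‖₂`, the output change on an input of norm at most `B` is bounded by
`e · B · β^{d-1} · Σᵢ ‖Uᵢ‖₂`. -/
theorem stmt10 (d : ℕ) (hd : 1 ≤ d) (dims : ℕ → ℕ)
    (W U : ∀ l : ℕ, Matrix (Fin (dims (l + 1))) (Fin (dims l)) ℝ)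
    (β B : ℝ) (hB : 0 < B)
    (hW : ∀ l < d, matrixSpectralNorm (W l) = β)
    (hU : ∀ l < d, matrixSpectralNorm (U l) ≤ (1 / (d : ℝ)) * matrixSpectralNorm (W l))
    (x : Fin (dims 0) → ℝ) (hx : vecNorm x ≤ B) :
    vecNorm (fun j => netFwd dims (fun l => W l + U l) x d j - netFwd dims W x d j)
      ≤ Real.exp 1 * B * β ^ (d - 1) * ∑ l ∈ Finset.range d, matrixSpectralNorm (U l) :=
  stmt10_general d hd dims W U β B hW hU x hx
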